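/- arXiv:0912.3136 — 7 statements merged into one kernel-verified Lean document; each statement's English description precedes it below -/
import Mathlib

section
/- Let u=(g₁,h₁) and v=(g₂,h₂) be vertices of G ⊠ H with d_{G⊠H}(u,v) = d_G(g₁,g₂). Then the closed interval I[u,v] equals { (g,h) : g ∈ I[g₁,g₂], d_H(h₁,h) ≤ d_G(g₁,g), and d_H(h,h₂) ≤ d_G(g,g₂) }. -/
open SimpleGraph

/-- The strong product of two simple graphs. -/
def strongProd {α β : Type*} (G : SimpleGraph α) (H : SimpleGraph β) :
    SimpleGraph (α × β) where
  Adj x y := x ≠ y ∧ (x.1 = y.1 ∨ G.Adj x.1 y.1) ∧ (x.2 = y.2 ∨ H.Adj x.2 y.2)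
  symm := by
    constructor
    rintro x y ⟨hne, h1, h2⟩
    exact ⟨hne.symm, h1.imp Eq.symm G.adj_symm, h2.imp Eq.symm H.adj_symm⟩
  loopless := by constructor; rintro x ⟨hne, -, -⟩; exact hne rfl

/-- The closed geodesic interval between two vertices. -/
def interval {V : Type*} (G : SimpleGraph V) (u v : V) : Set V :=
  {w | G.dist u w + G.dist w v = G.dist u v}

/-- The geodetic closure of a set of vertices. -/
def intervalSet {V : Type*} (G : SimpleGraph V) (S : Set V) : Set V :=
  ⋃ u ∈ S, ⋃ v ∈ S, interval G u v

/-- A set is geodetic if its geodetic closure is the whole vertex set. -/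
def IsGeodetic {V : Type*} (G : SimpleGraph V) (S : Set V) : Prop :=
  intervalSet G S = Set.univ

/-- A set is a hull set if iterating the interval operator yields everything. -/
def IsHullSet {V : Type*} (G : SimpleGraph V) (S : Set V) : Prop :=
  ∃ r : ℕ, (intervalSet G)^[r] S = Set.univ

/-- The geodetic number. -/
noncomputable def geodeticNumber {V : Type*} (G : SimpleGraph V) : ℕ :=
  sInf {n : ℕ | ∃ S : Set V, S.ncard = n ∧ IsGeodetic G S}

/-- The hull number. -/
noncomputable def hullNumber {V : Type*} (G : SimpleGraph V) : ℕ :=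
  sInf {n : ℕ | ∃ S : Set V, S.ncard = n ∧ IsHullSet G S}

/-- A vertex is simplicial if its neighborhood induces a complete graph. -/
def IsSimplicial {V : Type*} (G : SimpleGraph V) (v : V) : Prop :=
  ∀ ⦃a b : V⦄, G.Adj v a → G.Adj v b → a ≠ b → G.Adj a b

/-! Distances in `G ⊠ H` are maxima of the coordinate distances: a walk in the product projects
to walks in the factors that are no longer, and conversely two shortest walks in the factors can
be run simultaneously, the shorter one idling at its end. So for `p = (g, h)` the interval
condition reads `max a b + max c e = d(g₁, g₂)` with `a = d(g₁, g)`, `c = d(g, g₂)`,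
`b = d(h₁, h)`, `e = d(h, h₂)`; since `d(g₁, g₂) ≤ a + c`, this forces `a + c = d(g₁, g₂)`,
`b ≤ a` and `e ≤ c`. -/

namespace SimpleGraph

variable {V W : Type*} {G : SimpleGraph V} {H : SimpleGraph W}

lemma edist_map_le_edist {f : V → W} (hf : ∀ ⦃x y⦄, G.Adj x y → H.edist (f x) (f y) ≤ 1)
    (u v : V) : H.edist (f u) (f v) ≤ G.edist u v := by
  suffices ∀ {u v : V} (p : G.Walk u v), H.edist (f u) (f v) ≤ p.length from
    le_sInf (Set.forall_mem_range.2 this)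
  intro u v p
  induction p with
  | nil => simp
  | @cons x y z hadj p ih =>
    calc H.edist (f x) (f z) ≤ H.edist (f x) (f y) + H.edist (f y) (f z) := H.edist_triangle
      _ ≤ 1 + p.length := add_le_add (hf hadj) ih
      _ = (p.cons hadj).length := by rw [Walk.length_cons]; push_cast; ring

lemma exists_edist_le_one_and_edist_le {u v : V} {k : ℕ} (h : G.edist u v ≤ k + 1) :
    ∃ w, G.edist u w ≤ 1 ∧ G.edist w v ≤ k := by
  rcases h.lt_or_eq with hlt | heq
  · exact ⟨u, by simp, ENat.lt_natCast_add_one_iff.1 hlt⟩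
  · obtain ⟨p, hp⟩ := exists_walk_of_edist_eq_coe (k := k + 1) (by exact_mod_cast heq)
    cases p with
    | nil => simp at hp
    | cons hadj q =>
      refine ⟨_, edist_le_one_iff_adj_or_eq.2 (.inl hadj), (edist_le q).trans ?_⟩
      simp only [Walk.length_cons, Nat.add_right_cancel_iff] at hp
      exact_mod_cast hp.le

end SimpleGraph

section StrongProduct

variable {α β : Type*} {G : SimpleGraph α} {H : SimpleGraph β}

lemma strongProd_edist_le_one {g g' : α} {h h' : β} (hg : G.edist g g' ≤ 1)
    (hh : H.edist h h' ≤ 1) : (strongProd G H).edist (g, h) (g', h') ≤ 1 := by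
  rw [edist_le_one_iff_adj_or_eq] at hg hh ⊢
  by_cases heq : (g, h) = (g', h')
  · exact .inr heq
  · exact .inl ⟨heq, hg.symm, hh.symm⟩

lemma edist_fst_le_one_of_strongProd_adj {x y : α × β} (hadj : (strongProd G H).Adj x y) :
    G.edist x.1 y.1 ≤ 1 :=
  edist_le_one_iff_adj_or_eq.2 hadj.2.1.symm

lemma edist_snd_le_one_of_strongProd_adj {x y : α × β} (hadj : (strongProd G H).Adj x y) :
    H.edist x.2 y.2 ≤ 1 :=
  edist_le_one_iff_adj_or_eq.2 hadj.2.2.symm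

lemma strongProd_edist_le_of_le {g g' : α} {h h' : β} {k : ℕ} (hg : G.edist g g' ≤ k)
    (hh : H.edist h h' ≤ k) : (strongProd G H).edist (g, h) (g', h') ≤ k := by
  induction k generalizing g h with
  | zero => simp_all
  | succ k ih =>
    obtain ⟨g₀, hg₁, hg₀⟩ := exists_edist_le_one_and_edist_le (by exact_mod_cast hg)
    obtain ⟨h₀, hh₁, hh₀⟩ := exists_edist_le_one_and_edist_le (by exact_mod_cast hh)
    calc (strongProd G H).edist (g, h) (g', h')
        ≤ (strongProd G H).edist (g, h) (g₀, h₀) + (strongProd G H).edist (g₀, h₀) (g', h') :=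
          SimpleGraph.edist_triangle
      _ ≤ 1 + k := add_le_add (strongProd_edist_le_one hg₁ hh₁) (ih hg₀ hh₀)
      _ = ↑(k + 1) := by push_cast; ring

lemma strongProd_edist (g g' : α) (h h' : β) :
    (strongProd G H).edist (g, h) (g', h') = max (G.edist g g') (H.edist h h') := by
  refine le_antisymm ?_ (max_le ?_ ?_)
  · cases hmax : max (G.edist g g') (H.edist h h') with
    | top => exact le_top
    | coe k =>
      exact strongProd_edist_le_of_le (hmax ▸ le_max_left _ _) (hmax ▸ le_max_right _ _)
  · exact edist_map_le_edist (fun _ _ ↦ edist_fst_le_one_of_strongProd_adj) (g, h) (g', h')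
  · exact edist_map_le_edist (fun _ _ ↦ edist_snd_le_one_of_strongProd_adj) (g, h) (g', h')

lemma strongProd_dist (hG : G.Connected) (hH : H.Connected) (g g' : α) (h h' : β) :
    (strongProd G H).dist (g, h) (g', h') = max (G.dist g g') (H.dist h h') := by
  have hreach : (strongProd G H).Reachable (g, h) (g', h') := by
    rw [← edist_ne_top_iff_reachable, strongProd_edist, ← (hG g g').coe_dist_eq_edist,
      ← (hH h h').coe_dist_eq_edist, ← Nat.mono_cast.map_max]
    exact ENat.natCast_ne_top _
  apply Nat.cast_injective (R := ℕ∞)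
  rw [hreach.coe_dist_eq_edist, strongProd_edist, Nat.mono_cast.map_max,
    (hG g g').coe_dist_eq_edist, (hH h h').coe_dist_eq_edist]

end StrongProduct

lemma max_add_max_eq_iff {a b c d m : ℕ} (h : m ≤ a + c) :
    max a b + max c d = m ↔ a + c = m ∧ b ≤ a ∧ d ≤ c := by
  omega

theorem strongProd_interval_eq_general {α β : Type*}
    (G : SimpleGraph α) (H : SimpleGraph β) (hG : G.Connected) (hH : H.Connected)
    (g₁ g₂ : α) (h₁ h₂ : β)
    (hd : (strongProd G H).dist (g₁, h₁) (g₂, h₂) = G.dist g₁ g₂) :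
    interval (strongProd G H) (g₁, h₁) (g₂, h₂) =
      {p : α × β | p.1 ∈ interval G g₁ g₂ ∧
        H.dist h₁ p.2 ≤ G.dist g₁ p.1 ∧ H.dist p.2 h₂ ≤ G.dist p.1 g₂} := by
  ext ⟨g, h⟩
  simp only [interval, Set.mem_ofPred_eq, hd, strongProd_dist hG hH]
  exact max_add_max_eq_iff hG.dist_triangle

theorem strongProd_interval_eq {α β : Type*} [Fintype α] [Fintype β]
    (G : SimpleGraph α) (H : SimpleGraph β) (hG : G.Connected) (hH : H.Connected)
    (g₁ g₂ : α) (h₁ h₂ : β)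
    (hd : (strongProd G H).dist (g₁, h₁) (g₂, h₂) = G.dist g₁ g₂) :
    interval (strongProd G H) (g₁, h₁) (g₂, h₂) =
      {p : α × β | p.1 ∈ interval G g₁ g₂ ∧
        H.dist h₁ p.2 ≤ G.dist g₁ p.1 ∧ H.dist p.2 h₂ ≤ G.dist p.1 g₂} :=
  strongProd_interval_eq_general G H hG hH g₁ g₂ h₁ h₂ hd
end

section
/- Let g₁ ≠ g₂ be vertices of G and h₁, h₂, h₃ distinct vertices of H with h₃ ∉ I[h₁,h₂]. Then (g₂,h₃) ∉ I[(g₁,h₁),(g₁,h₂)] in G ⊠ H. -/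
open SimpleGraph

/-!
The projection of `G ⊠ H` onto `H` does not increase distances, and the fibre `{g₁} × H`
gives `d((g₁, h₁), (g₁, h₂)) ≤ d(h₁, h₂)`. So a geodesic from `(g₁, h₁)` to `(g₁, h₂)` through
`(g₂, h₃)` projects to a walk of length at most `d(h₁, h₂)` through `h₃`, i.e. `h₃ ∈ I[h₁, h₂]`.
-/

namespace SimpleGraph

variable {V W : Type*} {G : SimpleGraph V} {G' : SimpleGraph W}

theorem Hom.dist_le (f : G →g G') {u v : V} (huv : G.Reachable u v) :
    G'.dist (f u) (f v) ≤ G.dist u v := by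
  obtain ⟨p, hp⟩ := huv.exists_walk_length_eq_dist
  calc G'.dist (f u) (f v) ≤ (p.map f).length := SimpleGraph.dist_le _
    _ = G.dist u v := by rw [Walk.length_map, hp]

end SimpleGraph

section strongProd

variable {α β : Type*} (G : SimpleGraph α) (H : SimpleGraph β)

def strongProdLeft (b : β) : G →g strongProd G H where
  toFun a := (a, b)
  map_rel' hadj := ⟨by simp [hadj.ne], Or.inr hadj, Or.inl rfl⟩

def strongProdRight (a : α) : H →g strongProd G H where
  toFun b := (a, b)
  map_rel' hadj := ⟨by simp [hadj.ne], Or.inl rfl, Or.inr hadj⟩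

variable {G H}

theorem strongProd_reachable {a a' : α} {b b' : β} (hG : G.Reachable a a')
    (hH : H.Reachable b b') : (strongProd G H).Reachable (a, b) (a', b') :=
  (hG.map (strongProdLeft G H b)).trans (hH.map (strongProdRight G H a'))

theorem strongProd_dist_le_dist_snd (hH : H.Connected) (a : α) (b b' : β) :
    (strongProd G H).dist (a, b) (a, b') ≤ H.dist b b' :=
  (strongProdRight G H a).dist_le (hH b b')

theorem strongProd.exists_walk_snd_length_le {x y : α × β} (p : (strongProd G H).Walk x y) :
    ∃ q : H.Walk x.2 y.2, q.length ≤ p.length := by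
  induction p with
  | nil => exact ⟨.nil, le_rfl⟩
  | cons hadj _ ih =>
    obtain ⟨q, hq⟩ := ih
    rcases hadj.2.2 with heq | hadj₂
    · exact ⟨q.copy heq.symm rfl, by simp only [Walk.length_copy, Walk.length_cons]; omega⟩
    · exact ⟨.cons hadj₂ q, by simp only [Walk.length_cons]; omega⟩

theorem strongProd_dist_snd_le {x y : α × β} (hxy : (strongProd G H).Reachable x y) :
    H.dist x.2 y.2 ≤ (strongProd G H).dist x y := by
  obtain ⟨p, hp⟩ := hxy.exists_walk_length_eq_dist
  obtain ⟨q, hq⟩ := strongProd.exists_walk_snd_length_le p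
  exact (dist_le q).trans (hp ▸ hq)

end strongProd

theorem strongProd_not_mem_interval_ii_general {α β : Type*}
    (G : SimpleGraph α) (H : SimpleGraph β) (hG : G.Connected) (hH : H.Connected)
    (g₁ g₂ : α) (h₁ h₂ h₃ : β)
    (hmem : h₃ ∉ interval H h₁ h₂) :
    (g₂, h₃) ∉ interval (strongProd G H) (g₁, h₁) (g₁, h₂) := by
  simp only [interval, Set.mem_ofPred_eq] at hmem ⊢
  intro hx
  have hleft : H.dist h₁ h₃ ≤ (strongProd G H).dist (g₁, h₁) (g₂, h₃) :=
    strongProd_dist_snd_le (strongProd_reachable (hG g₁ g₂) (hH h₁ h₃))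
  have hright : H.dist h₃ h₂ ≤ (strongProd G H).dist (g₂, h₃) (g₁, h₂) :=
    strongProd_dist_snd_le (strongProd_reachable (hG g₂ g₁) (hH h₃ h₂))
  have hfiber := strongProd_dist_le_dist_snd (G := G) hH g₁ h₁ h₂
  have htri : H.dist h₁ h₂ ≤ H.dist h₁ h₃ + H.dist h₃ h₂ := hH.dist_triangle
  omega

theorem strongProd_not_mem_interval_ii {α β : Type*} [Fintype α] [Fintype β]
    (G : SimpleGraph α) (H : SimpleGraph β) (hG : G.Connected) (hH : H.Connected)
    (g₁ g₂ : α) (h₁ h₂ h₃ : β) (hg : g₁ ≠ g₂)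
    (h12 : h₁ ≠ h₂) (h13 : h₁ ≠ h₃) (h23 : h₂ ≠ h₃)
    (hmem : h₃ ∉ interval H h₁ h₂) :
    (g₂, h₃) ∉ interval (strongProd G H) (g₁, h₁) (g₁, h₂) :=
  strongProd_not_mem_interval_ii_general G H hG hH g₁ g₂ h₁ h₂ h₃ hmem
end

section
/- Let g₁ ≠ g₂ be vertices of G and h₁, h₂, h₃ distinct vertices of H with h₃ ∉ I[h₁,h₂]. Then (g₁,h₃) ∉ I[(g₁,h₁),(g₂,h₂)] in G ⊠ H. -/
open SimpleGraph

/-!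
Both projections of the strong product send edges to edges or loops, and a diagonal walk realises
the maximum, so distances in `G ⊠ H` are the maxima of the coordinate distances. Going from
`(g₁, h₁)` to `(g₁, h₃)` costs `d_H(h₁, h₃) ≥ 1`. If `d_G(g₁, g₂)` is the larger coordinate
distance between the endpoints, this step cannot be recovered; otherwise all three distances
are those of `H`, and the equality would put `h₃` into `I[h₁, h₂]`.
-/

namespace SimpleGraph

variable {V W : Type*} {G : SimpleGraph V} {H : SimpleGraph W}

theorem Walk.exists_walk_length_le_of_adj {f : V → W}
    (hf : ∀ ⦃u v⦄, G.Adj u v → f u = f v ∨ H.Adj (f u) (f v)) {u v : V} (p : G.Walk u v) :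
    ∃ q : H.Walk (f u) (f v), q.length ≤ p.length := by
  induction p with
  | nil => exact ⟨.nil, le_rfl⟩
  | cons h p ih =>
    obtain ⟨q, hq⟩ := ih
    rcases hf h with heq | hadj
    · exact ⟨q.copy heq.symm rfl, by simp only [Walk.length_copy, Walk.length_cons]; omega⟩
    · exact ⟨.cons hadj q, by simp only [Walk.length_cons]; omega⟩

theorem dist_le_dist_of_adj {f : V → W}
    (hf : ∀ ⦃u v⦄, G.Adj u v → f u = f v ∨ H.Adj (f u) (f v)) {u v : V} (huv : G.Reachable u v) :
    H.dist (f u) (f v) ≤ G.dist u v := by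
  obtain ⟨p, hp⟩ := huv.exists_walk_length_eq_dist
  obtain ⟨q, hq⟩ := p.exists_walk_length_le_of_adj hf
  exact (dist_le q).trans (hp ▸ hq)

end SimpleGraph

namespace strongProd

variable {α β : Type*} {G : SimpleGraph α} {H : SimpleGraph β}

theorem adj_fst {x y : α × β} (h : (strongProd G H).Adj x y) : x.1 = y.1 ∨ G.Adj x.1 y.1 :=
  h.2.1

theorem adj_snd {x y : α × β} (h : (strongProd G H).Adj x y) : x.2 = y.2 ∨ H.Adj x.2 y.2 :=
  h.2.2

def inl (b : β) : G →g strongProd G H where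
  toFun a := (a, b)
  map_rel' h := ⟨fun he => h.ne (congrArg Prod.fst he), .inr h, .inl rfl⟩

def inr (a : α) : H →g strongProd G H where
  toFun b := (a, b)
  map_rel' h := ⟨fun he => h.ne (congrArg Prod.snd he), .inl rfl, .inr h⟩

theorem exists_walk_length_eq_max {a b : α} {c d : β} (p : G.Walk a b) (q : H.Walk c d) :
    ∃ w : (strongProd G H).Walk (a, c) (b, d), w.length = max p.length q.length := by
  induction p generalizing c with
  | nil => exact ⟨q.map (inr _), (Walk.length_map _ _).trans (by simp)⟩
  | cons hG p ih =>
    cases q with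
    | nil => exact ⟨(Walk.cons hG p).map (inl _), (Walk.length_map _ _).trans (by simp)⟩
    | cons hH q =>
      obtain ⟨w, hw⟩ := ih q
      refine ⟨.cons (v := (_, _)) ⟨fun he => hG.ne (congrArg Prod.fst he), .inr hG, .inr hH⟩ w, ?_⟩
      change w.length + 1 = max (p.length + 1) (q.length + 1)
      omega

variable {x y : α × β}

theorem dist_le_max (hG : G.Reachable x.1 y.1) (hH : H.Reachable x.2 y.2) :
    (strongProd G H).dist x y ≤ max (G.dist x.1 y.1) (H.dist x.2 y.2) := by
  obtain ⟨p, hp⟩ := hG.exists_walk_length_eq_dist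
  obtain ⟨q, hq⟩ := hH.exists_walk_length_eq_dist
  obtain ⟨w, hw⟩ := exists_walk_length_eq_max p q
  exact (dist_le w).trans (hw ▸ hp ▸ hq ▸ le_rfl)

theorem reachable (hG : G.Reachable x.1 y.1) (hH : H.Reachable x.2 y.2) :
    (strongProd G H).Reachable x y := by
  obtain ⟨p⟩ := hG
  obtain ⟨q⟩ := hH
  exact ⟨(exists_walk_length_eq_max p q).choose⟩

theorem dist_eq_max (hG : G.Reachable x.1 y.1) (hH : H.Reachable x.2 y.2) :
    (strongProd G H).dist x y = max (G.dist x.1 y.1) (H.dist x.2 y.2) :=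
  (dist_le_max hG hH).antisymm <| max_le
    (dist_le_dist_of_adj (f := Prod.fst) (fun _ _ => adj_fst) (reachable hG hH))
    (dist_le_dist_of_adj (f := Prod.snd) (fun _ _ => adj_snd) (reachable hG hH))

end strongProd

theorem strongProd_not_mem_interval_iii_general {α β : Type*}
    (G : SimpleGraph α) (H : SimpleGraph β) (hG : G.Connected) (hH : H.Connected)
    (g₁ g₂ : α) (h₁ h₂ h₃ : β)
    (h13 : h₁ ≠ h₃)
    (hmem : h₃ ∉ interval H h₁ h₂) :
    (g₁, h₃) ∉ interval (strongProd G H) (g₁, h₁) (g₂, h₂) := by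
  intro hc
  simp only [interval, Set.mem_ofPred_eq,
    strongProd.dist_eq_max (hG _ _) (hH _ _), dist_self] at hc hmem
  have hpos := hH.pos_dist_of_ne h13
  have htri := hH.dist_triangle (u := h₁) (v := h₃) (w := h₂)
  omega

theorem strongProd_not_mem_interval_iii {α β : Type*} [Fintype α] [Fintype β]
    (G : SimpleGraph α) (H : SimpleGraph β) (hG : G.Connected) (hH : H.Connected)
    (g₁ g₂ : α) (h₁ h₂ h₃ : β) (hg : g₁ ≠ g₂)
    (h12 : h₁ ≠ h₂) (h13 : h₁ ≠ h₃) (h23 : h₂ ≠ h₃)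
    (hmem : h₃ ∉ interval H h₁ h₂) :
    (g₁, h₃) ∉ interval (strongProd G H) (g₁, h₁) (g₂, h₂) :=
  strongProd_not_mem_interval_iii_general G H hG hH g₁ g₂ h₁ h₂ h₃ h13 hmem
end

section
/- For any two connected graphs G and H, the hull number of G ⊠ H is at most the product of the hull numbers of G and H: h(G ⊠ H) ≤ h(G)·h(H). -/
open SimpleGraph

/-!
If `S` and `T` are hull sets of `G` and `H`, then `S ×ˢ T` is a hull set of `G ⊠ H`. Every edge
of `G ⊠ H` moves each coordinate by at most one step, so the projections do not increase
distances, while the fibre inclusions `x ↦ (x, b)` and `y ↦ (a, y)` are graph homomorphisms;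
hence distances inside a fibre are those of the factor. So one interval step of `G` in the first
coordinate, or of `H` in the second, is one interval step of `G ⊠ H`, and `k` steps in both
factors take `2k` steps in the product.
-/

namespace SimpleGraph

variable {V W : Type*} {G : SimpleGraph V} {G' : SimpleGraph W}

lemma edist_apply_le (f : V → W)
    (hf : ∀ ⦃u v⦄, G.Adj u v → f u = f v ∨ G'.Adj (f u) (f v)) (u v : V) :
    G'.edist (f u) (f v) ≤ G.edist u v := by
  refine le_iInf fun p => ?_
  induction p with
  | nil => simp
  | @cons u v w huv p ih =>
    calc G'.edist (f u) (f w) ≤ G'.edist (f u) (f v) + G'.edist (f v) (f w) :=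
          SimpleGraph.edist_triangle
      _ ≤ 1 + p.length := by
          gcongr
          rcases hf huv with h | h
          · simp [h]
          · exact (edist_eq_one_iff_adj.2 h).le
      _ = (p.cons huv).length := by simp [add_comm]

end SimpleGraph

section StrongProduct

variable {α β : Type*} {G : SimpleGraph α} {H : SimpleGraph β}

lemma strongProd_adj_left {x y : α} (b : β) (h : G.Adj x y) :
    (strongProd G H).Adj (x, b) (y, b) :=
  ⟨by simp [h.ne], Or.inr h, Or.inl rfl⟩

lemma strongProd_adj_right (a : α) {x y : β} (h : H.Adj x y) :
    (strongProd G H).Adj (a, x) (a, y) :=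
  ⟨by simp [h.ne], Or.inl rfl, Or.inr h⟩

lemma strongProd_edist_fst (x y : α) (b : β) :
    (strongProd G H).edist (x, b) (y, b) = G.edist x y :=
  le_antisymm
    (edist_apply_le _ (fun _ _ h => Or.inr (strongProd_adj_left b h)) x y)
    (edist_apply_le (G := strongProd G H) Prod.fst (fun _ _ h => h.2.1) (x, b) (y, b))

lemma strongProd_edist_snd (a : α) (x y : β) :
    (strongProd G H).edist (a, x) (a, y) = H.edist x y :=
  le_antisymm
    (edist_apply_le _ (fun _ _ h => Or.inr (strongProd_adj_right a h)) x y)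
    (edist_apply_le (G := strongProd G H) Prod.snd (fun _ _ h => h.2.2) (a, x) (a, y))

lemma strongProd_dist_fst (x y : α) (b : β) :
    (strongProd G H).dist (x, b) (y, b) = G.dist x y :=
  congrArg ENat.toNat (strongProd_edist_fst x y b)

lemma strongProd_dist_snd (a : α) (x y : β) :
    (strongProd G H).dist (a, x) (a, y) = H.dist x y :=
  congrArg ENat.toNat (strongProd_edist_snd a x y)

lemma intervalSet_prod_subset_left (A : Set α) (B : Set β) :
    intervalSet G A ×ˢ B ⊆ intervalSet (strongProd G H) (A ×ˢ B) := by
  rintro ⟨w, b⟩ ⟨hw, hb⟩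
  simp only [intervalSet, Set.mem_iUnion] at hw ⊢
  obtain ⟨u, hu, v, hv, huv⟩ := hw
  refine ⟨(u, b), ⟨hu, hb⟩, (v, b), ⟨hv, hb⟩, ?_⟩
  simpa only [interval, Set.mem_ofPred_eq, strongProd_dist_fst] using huv

lemma intervalSet_prod_subset_right (A : Set α) (B : Set β) :
    A ×ˢ intervalSet H B ⊆ intervalSet (strongProd G H) (A ×ˢ B) := by
  rintro ⟨a, w⟩ ⟨ha, hw⟩
  simp only [intervalSet, Set.mem_iUnion] at hw ⊢
  obtain ⟨u, hu, v, hv, huv⟩ := hw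
  refine ⟨(a, u), ⟨ha, hu⟩, (a, v), ⟨ha, hv⟩, ?_⟩
  simpa only [interval, Set.mem_ofPred_eq, strongProd_dist_snd] using huv

end StrongProduct

section Hull

variable {V : Type*} {G : SimpleGraph V}

lemma subset_intervalSet (S : Set V) : S ⊆ intervalSet G S := fun u hu => by
  simp only [intervalSet, Set.mem_iUnion]
  exact ⟨u, hu, u, hu, by simp [interval]⟩

lemma intervalSet_mono : Monotone (intervalSet G) := fun S T hST w hw => by
  simp only [intervalSet, Set.mem_iUnion] at hw ⊢
  obtain ⟨u, hu, v, hv, huv⟩ := hw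
  exact ⟨u, hST hu, v, hST hv, huv⟩

lemma IsHullSet.exists_forall_iterate_eq_univ {S : Set V} (hS : IsHullSet G S) :
    ∃ r, ∀ k ≥ r, (intervalSet G)^[k] S = Set.univ := by
  obtain ⟨r, hr⟩ := hS
  refine ⟨r, fun k hk => Set.eq_univ_of_univ_subset ?_⟩
  exact hr ▸ Function.monotone_iterate_of_id_le (fun T => subset_intervalSet T) hk S

lemma IsHullSet.hullNumber_le_ncard {S : Set V} (hS : IsHullSet G S) :
    hullNumber G ≤ S.ncard :=
  Nat.sInf_le ⟨S, rfl, hS⟩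

variable (G) in
lemma exists_isHullSet_ncard_eq_hullNumber :
    ∃ S : Set V, IsHullSet G S ∧ S.ncard = hullNumber G := by
  obtain ⟨S, hcard, hS⟩ := Nat.sInf_mem (⟨_, Set.univ, rfl, 0, rfl⟩ :
    {n : ℕ | ∃ S : Set V, S.ncard = n ∧ IsHullSet G S}.Nonempty)
  exact ⟨S, hS, hcard⟩

end Hull

lemma prod_iterate_subset {α β : Type*} {f : Set α → Set α} {g : Set β → Set β}
    {h : Set (α × β) → Set (α × β)} (hh : Monotone h)
    (hfg : ∀ A B, f A ×ˢ g B ⊆ h (A ×ˢ B)) (k : ℕ) (A : Set α) (B : Set β) :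
    f^[k] A ×ˢ g^[k] B ⊆ h^[k] (A ×ˢ B) := by
  induction k generalizing A B with
  | zero => exact subset_rfl
  | succ k ih =>
    simp only [Function.iterate_succ_apply]
    exact (ih (f A) (g B)).trans (hh.iterate k (hfg A B))

lemma IsHullSet.prod {α β : Type*} {G : SimpleGraph α} {H : SimpleGraph β} {S : Set α}
    {T : Set β} (hS : IsHullSet G S) (hT : IsHullSet H T) :
    IsHullSet (strongProd G H) (S ×ˢ T) := by
  obtain ⟨r, hr⟩ := hS.exists_forall_iterate_eq_univ
  obtain ⟨s, hs⟩ := hT.exists_forall_iterate_eq_univ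
  have hstep (A : Set α) (B : Set β) :
      intervalSet G A ×ˢ intervalSet H B ⊆ (intervalSet (strongProd G H))^[2] (A ×ˢ B) :=
    intervalSet_prod_subset_right _ _ |>.trans <|
      intervalSet_mono (intervalSet_prod_subset_left A B)
  refine ⟨2 * max r s, Set.eq_univ_of_univ_subset ?_⟩
  have h := prod_iterate_subset (intervalSet_mono.iterate 2) hstep (max r s) S T
  rwa [hr _ (le_max_left r s), hs _ (le_max_right r s), Set.univ_prod_univ,
    ← Function.iterate_mul] at h

theorem strongProd_hullNumber_le_general {α β : Type*}
    (G : SimpleGraph α) (H : SimpleGraph β) :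
    hullNumber (strongProd G H) ≤ hullNumber G * hullNumber H := by
  obtain ⟨S, hS, hScard⟩ := exists_isHullSet_ncard_eq_hullNumber G
  obtain ⟨T, hT, hTcard⟩ := exists_isHullSet_ncard_eq_hullNumber H
  calc hullNumber (strongProd G H) ≤ (S ×ˢ T).ncard := (hS.prod hT).hullNumber_le_ncard
    _ = hullNumber G * hullNumber H := by rw [Set.ncard_prod, hScard, hTcard]

theorem strongProd_hullNumber_le {α β : Type*} [Fintype α] [Fintype β]
    (G : SimpleGraph α) (H : SimpleGraph β) (hG : G.Connected) (hH : H.Connected) :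
    hullNumber (strongProd G H) ≤ hullNumber G * hullNumber H :=
  strongProd_hullNumber_le_general G H
end

section
/- A vertex (g,h) of G ⊠ H is simplicial if and only if g is a simplicial vertex of G and h is a simplicial vertex of H; that is, Ext(G ⊠ H) = Ext(G) × Ext(H). -/
open SimpleGraph

/-! In the reflexive closure of adjacency, `v` is simplicial exactly when its closed
neighbourhood is a clique. The reflexive closure of the adjacency of `G ⊠ H` is the product of
those of `G` and `H`, and for a product of reflexive relations this clique condition splits into
the two coordinates: one direction fixes the other coordinate, using reflexivity. -/

open Relation

def IsRelSimplicial {V : Type*} (r : V → V → Prop) (x : V) : Prop :=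
  ∀ ⦃a b : V⦄, r x a → r x b → r a b

theorem isRelSimplicial_prod_iff {α β : Type*} {r : α → α → Prop} {s : β → β → Prop}
    [Std.Refl r] [Std.Refl s] {x : α} {y : β} :
    IsRelSimplicial (fun p q : α × β ↦ r p.1 q.1 ∧ s p.2 q.2) (x, y) ↔
      IsRelSimplicial r x ∧ IsRelSimplicial s y := by
  refine ⟨fun h ↦ ⟨fun a b ha hb ↦ ?_, fun a b ha hb ↦ ?_⟩, ?_⟩
  · exact (@h (a, y) (b, y) ⟨ha, refl y⟩ ⟨hb, refl y⟩).1
  · exact (@h (x, a) (x, b) ⟨refl x, ha⟩ ⟨refl x, hb⟩).2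
  · rintro ⟨hr, hs⟩ p q ⟨hp₁, hp₂⟩ ⟨hq₁, hq₂⟩
    exact ⟨hr hp₁ hq₁, hs hp₂ hq₂⟩

theorem isSimplicial_iff_isRelSimplicial_reflGen {V : Type*} {G : SimpleGraph V} {v : V} :
    IsSimplicial G v ↔ IsRelSimplicial (ReflGen G.Adj) v := by
  simp only [IsSimplicial, IsRelSimplicial, reflGen_iff]
  refine ⟨fun h a b ha hb ↦ ?_, fun h a b ha hb hab ↦ ?_⟩
  · rcases ha with rfl | ha <;> rcases hb with rfl | hb
    · exact .inl rfl
    · exact .inr hb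
    · exact .inr ha.symm
    · by_cases hab : b = a
      · exact .inl hab
      · exact .inr (h ha hb (Ne.symm hab))
  · exact (h (.inr ha) (.inr hb)).resolve_left hab.symm

theorem reflGen_strongProd_adj {α β : Type*} {G : SimpleGraph α} {H : SimpleGraph β} :
    ReflGen (strongProd G H).Adj = fun x y ↦ ReflGen G.Adj x.1 y.1 ∧ ReflGen H.Adj x.2 y.2 := by
  ext x y
  simp only [reflGen_iff, strongProd, Prod.ext_iff]
  tauto

theorem strongProd_simplicial_iff_general {α β : Type*}
    (G : SimpleGraph α) (H : SimpleGraph β) :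
    ∀ (g : α) (h : β),
      IsSimplicial (strongProd G H) (g, h) ↔ IsSimplicial G g ∧ IsSimplicial H h := by
  intro g h
  simp only [isSimplicial_iff_isRelSimplicial_reflGen, reflGen_strongProd_adj]
  exact isRelSimplicial_prod_iff

theorem strongProd_simplicial_iff {α β : Type*} [Fintype α] [Fintype β]
    (G : SimpleGraph α) (H : SimpleGraph β) (hG : G.Connected) (hH : H.Connected) :
    ∀ (g : α) (h : β),
      IsSimplicial (strongProd G H) (g, h) ↔ IsSimplicial G g ∧ IsSimplicial H h :=
  strongProd_simplicial_iff_general G H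
end

section
/- Two connected graphs G and H are both extreme geodesic (their sets of simplicial vertices are geodetic) if and only if G ⊠ H is extreme geodesic. In particular, if G and H are extreme geodesic, then g(G ⊠ H) = h(G ⊠ H) = g(G)·g(H). -/
open SimpleGraph

/-- A graph is extreme geodesic if its set of simplicial vertices is geodetic. -/
def ExtremeGeodesic {V : Type*} (G : SimpleGraph V) : Prop :=
  IsGeodetic G {v | IsSimplicial G v}

/-!
Distances in `G ⊠ H` are maxima of the coordinate distances, and a vertex of `G ⊠ H` is
simplicial exactly when both coordinates are. A simplicial vertex `v` lies on a geodesic only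
as an endpoint: its neighbours just before and after it on a geodesic would be at distance `2`.
Hence every geodetic or hull set contains all simplicial vertices, so in an extreme geodesic graph
`g = h = |Ext|`, and `|Ext(G ⊠ H)| = |Ext G| · |Ext H|`.

If `w₁ ∈ I[u₁, v₁]` and `w₂ ∈ I[u₂, v₂]`, pick the smallest of the four coordinate distances from
`w` to `u₁, v₁, u₂, v₂`, say `d(u₁, w₁)`; then `(w₁, w₂)` lies on a geodesic from `(u₁, u₂)` to
`(u₁, v₂)`. Conversely, fix a simplicial `p ∈ H`: if `(w, p)` lies on a geodesic between `u, v`,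
the `max`-arithmetic forces `w ∈ I[u₁, v₁]` unless `p ∈ I[u₂, v₂]`, and in that case `p` is an
endpoint, which collapses `w` onto `u₁` or `v₁`.
-/

namespace SimpleGraph

section General

variable {V W : Type*} {G : SimpleGraph V} {G' : SimpleGraph W} {S : Set V} {u v w x y : V}

theorem Walk.exists_length_le_of_adj_imp (f : V → W)
    (hf : ∀ ⦃a b⦄, G.Adj a b → f a = f b ∨ G'.Adj (f a) (f b)) :
    ∀ {u v : V} (p : G.Walk u v), ∃ q : G'.Walk (f u) (f v), q.length ≤ p.length
  | _, _, .nil => ⟨.nil, le_rfl⟩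
  | _, _, .cons h p => by
    obtain ⟨q, hq⟩ := exists_length_le_of_adj_imp f hf p
    rcases hf h with heq | hadj
    · exact ⟨q.copy heq.symm rfl, by simp only [Walk.length_copy, Walk.length_cons]; omega⟩
    · exact ⟨.cons hadj q, by simpa using hq⟩

theorem Reachable.dist_le_of_adj_imp (f : V → W)
    (hf : ∀ ⦃a b⦄, G.Adj a b → f a = f b ∨ G'.Adj (f a) (f b)) (h : G.Reachable u v) :
    G'.dist (f u) (f v) ≤ G.dist u v := by
  obtain ⟨p, hp⟩ := h.exists_walk_length_eq_dist
  obtain ⟨q, hq⟩ := p.exists_length_le_of_adj_imp f hf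
  exact (dist_le q).trans (hp ▸ hq)

theorem Iso.dist_eq (e : G ≃g G') (hG : G.Connected) (u v : V) :
    G'.dist (e u) (e v) = G.dist u v := by
  refine le_antisymm ((hG u v).dist_le_of_adj_imp e fun _ _ h => Or.inr (e.map_adj_iff.2 h)) ?_
  simpa using ((hG u v).map e.toHom).dist_le_of_adj_imp e.symm
    fun _ _ h => Or.inr (e.symm.map_adj_iff.2 h)

theorem Connected.exists_adj_dist_add_one (hG : G.Connected) (h : u ≠ v) :
    ∃ p, G.Adj u p ∧ G.dist p v + 1 = G.dist u v := by
  obtain ⟨q, hq⟩ := hG.exists_walk_length_eq_dist u v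
  cases q with
  | nil => exact absurd rfl h
  | @cons _ p _ hadj q =>
    have hle : G.dist p v ≤ q.length := dist_le q
    have htri : G.dist u v ≤ G.dist u p + G.dist p v := hG.dist_triangle
    rw [dist_eq_one_iff_adj.2 hadj] at htri
    exact ⟨p, hadj, by simp only [Walk.length_cons] at hq; omega⟩

theorem mem_intervalSet : w ∈ intervalSet G S ↔ ∃ u ∈ S, ∃ v ∈ S, w ∈ interval G u v := by
  simp [intervalSet]

theorem IsGeodetic.mem_intervalSet (h : IsGeodetic G S) (w : V) : w ∈ intervalSet G S :=
  h ▸ Set.mem_univ w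

theorem IsGeodetic.isHullSet (h : IsGeodetic G S) : IsHullSet G S :=
  ⟨1, h⟩

theorem IsSimplicial.eq_or_adj (hv : IsSimplicial G v) (ha : v = x ∨ G.Adj v x)
    (hb : v = y ∨ G.Adj v y) : x = y ∨ G.Adj x y := by
  rcases eq_or_ne x y with hxy | hxy
  · exact .inl hxy
  rcases ha with rfl | ha <;> rcases hb with rfl | hb
  exacts [.inl rfl, .inr hb, .inr ha.symm, .inr (hv ha hb hxy)]

theorem IsSimplicial.eq_or_eq_of_mem_interval (hG : G.Connected) (hv : IsSimplicial G v)
    (h : v ∈ interval G x y) : v = x ∨ v = y := by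
  by_contra! hne
  obtain ⟨p, hvp, hp⟩ := hG.exists_adj_dist_add_one hne.1
  obtain ⟨q, hvq, hq⟩ := hG.exists_adj_dist_add_one hne.2
  have hpq : G.dist p q ≤ 1 := by
    rcases eq_or_ne p q with rfl | hpq
    · simp
    · exact (dist_eq_one_iff_adj.2 (hv hvp hvq hpq)).le
  have h₁ : G.dist x y ≤ G.dist x p + G.dist p y := hG.dist_triangle
  have h₂ : G.dist p y ≤ G.dist p q + G.dist q y := hG.dist_triangle
  simp only [interval, Set.mem_ofPred_eq] at h
  rw [dist_comm (u := p), dist_comm (u := v) (v := x)] at hp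
  omega

theorem IsSimplicial.mem_of_mem_intervalSet (hG : G.Connected) (hv : IsSimplicial G v)
    (h : v ∈ intervalSet G S) : v ∈ S := by
  obtain ⟨a, ha, b, hb, hab⟩ := mem_intervalSet.1 h
  rcases hv.eq_or_eq_of_mem_interval hG hab with rfl | rfl
  exacts [ha, hb]

theorem IsSimplicial.map (e : G ≃g G') (hv : IsSimplicial G v) : IsSimplicial G' (e v) := by
  intro a b ha hb hab
  obtain ⟨a, rfl⟩ := e.surjective a
  obtain ⟨b, rfl⟩ := e.surjective b
  exact e.map_adj_iff.2 (hv (e.map_adj_iff.1 ha) (e.map_adj_iff.1 hb) (ne_of_apply_ne e hab))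

theorem IsHullSet.setOf_isSimplicial_subset (hG : G.Connected) (hS : IsHullSet G S) :
    {v | IsSimplicial G v} ⊆ S := by
  obtain ⟨r, hr⟩ := hS
  intro v hv
  suffices ∀ n, v ∈ (intervalSet G)^[n] S → v ∈ S from this r (hr ▸ Set.mem_univ v)
  intro n hn
  induction n with
  | zero => exact hn
  | succ n ih =>
    rw [Function.iterate_succ_apply'] at hn
    exact ih (hv.mem_of_mem_intervalSet hG hn)

theorem ExtremeGeodesic.exists_isSimplicial [Nonempty V] (h : ExtremeGeodesic G) :
    ∃ v, IsSimplicial G v := by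
  obtain ⟨u, hu, -⟩ := mem_intervalSet.1 (IsGeodetic.mem_intervalSet h (Classical.arbitrary V))
  exact ⟨u, hu⟩

theorem ExtremeGeodesic.of_iso (e : G ≃g G') (hG : G.Connected) (h : ExtremeGeodesic G) :
    ExtremeGeodesic G' := by
  refine Set.eq_univ_of_forall fun w => ?_
  obtain ⟨u, hu, v, hv, huv⟩ := mem_intervalSet.1 (IsGeodetic.mem_intervalSet h (e.symm w))
  refine mem_intervalSet.2 ⟨e u, hu.map e, e v, hv.map e, ?_⟩
  simpa [interval, ← e.dist_eq hG] using huv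

theorem sInf_ncard_eq_ncard_of_forall_subset [Finite V] {P : Set V → Prop} {T : Set V}
    (hT : P T) (hsub : ∀ S, P S → T ⊆ S) :
    sInf {n | ∃ S : Set V, S.ncard = n ∧ P S} = T.ncard :=
  le_antisymm (Nat.sInf_le ⟨T, rfl, hT⟩)
    (le_csInf ⟨_, T, rfl, hT⟩ fun _ ⟨S, hS, hPS⟩ => hS ▸ Set.ncard_le_ncard (hsub S hPS))

theorem ExtremeGeodesic.hullNumber_eq [Finite V] (hG : G.Connected) (h : ExtremeGeodesic G) :
    hullNumber G = {v | IsSimplicial G v}.ncard :=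
  sInf_ncard_eq_ncard_of_forall_subset (IsGeodetic.isHullSet h)
    fun _ hS => hS.setOf_isSimplicial_subset hG

theorem ExtremeGeodesic.geodeticNumber_eq [Finite V] (hG : G.Connected) (h : ExtremeGeodesic G) :
    geodeticNumber G = {v | IsSimplicial G v}.ncard :=
  sInf_ncard_eq_ncard_of_forall_subset h fun _ hS => hS.isHullSet.setOf_isSimplicial_subset hG

end General

section StrongProd

variable {α β : Type*} {G : SimpleGraph α} {H : SimpleGraph β}

theorem strongProd_adj {x y : α × β} :
    (strongProd G H).Adj x y ↔
      x ≠ y ∧ (x.1 = y.1 ∨ G.Adj x.1 y.1) ∧ (x.2 = y.2 ∨ H.Adj x.2 y.2) :=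
  Iff.rfl

theorem Adj.strongProd_left {a b : α} (h : G.Adj a b) (c : β) :
    (strongProd G H).Adj (a, c) (b, c) :=
  strongProd_adj.2 ⟨by simp [h.ne], .inr h, .inl rfl⟩

theorem Adj.strongProd_right {c d : β} (a : α) (h : H.Adj c d) :
    (strongProd G H).Adj (a, c) (a, d) :=
  strongProd_adj.2 ⟨by simp [h.ne], .inl rfl, .inr h⟩

theorem Walk.exists_strongProd_length_eq_max :
    ∀ {a b : α} {c d : β} (p : G.Walk a b) (q : H.Walk c d),
      ∃ r : (strongProd G H).Walk (a, c) (b, d), r.length = max p.length q.length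
  | _, _, _, _, .nil, .nil => ⟨.nil, rfl⟩
  | _, _, c, _, .cons h p, .nil => by
    obtain ⟨r, hr⟩ := exists_strongProd_length_eq_max p (.nil : H.Walk c c)
    refine ⟨.cons (h.strongProd_left c) r, ?_⟩
    simp [hr]
  | a, _, _, _, .nil, .cons h q => by
    obtain ⟨r, hr⟩ := exists_strongProd_length_eq_max (.nil : G.Walk a a) q
    refine ⟨.cons (h.strongProd_right a) r, ?_⟩
    simp [hr]
  | _, _, _, _, .cons h p, .cons h' q => by
    obtain ⟨r, hr⟩ := exists_strongProd_length_eq_max p q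
    refine ⟨.cons (strongProd_adj.2 ⟨by simp [h.ne], .inr h, .inr h'⟩) r, ?_⟩
    simp [hr, Nat.succ_max_succ]

theorem Connected.strongProd (hG : G.Connected) (hH : H.Connected) :
    (strongProd G H).Connected := by
  have : Nonempty α := hG.nonempty
  have : Nonempty β := hH.nonempty
  refine (connected_iff _).2 ⟨fun x y => ?_, inferInstance⟩
  obtain ⟨p⟩ := hG x.1 y.1
  obtain ⟨q⟩ := hH x.2 y.2
  exact ⟨(p.exists_strongProd_length_eq_max q).choose⟩

theorem dist_strongProd (hG : G.Connected) (hH : H.Connected) (x y : α × β) :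
    (strongProd G H).dist x y = max (G.dist x.1 y.1) (H.dist x.2 y.2) := by
  obtain ⟨p, hp⟩ := hG.exists_walk_length_eq_dist x.1 y.1
  obtain ⟨q, hq⟩ := hH.exists_walk_length_eq_dist x.2 y.2
  obtain ⟨r, hr⟩ := p.exists_strongProd_length_eq_max q
  refine le_antisymm (hp ▸ hq ▸ hr ▸ dist_le r) (max_le ?_ ?_)
  · exact (hG.strongProd hH x y).dist_le_of_adj_imp Prod.fst fun _ _ h => h.2.1
  · exact (hG.strongProd hH x y).dist_le_of_adj_imp Prod.snd fun _ _ h => h.2.2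

theorem isSimplicial_strongProd_iff {p : α × β} :
    IsSimplicial (strongProd G H) p ↔ IsSimplicial G p.1 ∧ IsSimplicial H p.2 := by
  refine ⟨fun hp => ⟨fun a b ha hb hab => ?_, fun a b ha hb hab => ?_⟩,
    fun ⟨h₁, h₂⟩ a b ha hb hab => ⟨hab, h₁.eq_or_adj ha.2.1 hb.2.1, h₂.eq_or_adj ha.2.2 hb.2.2⟩⟩
  · exact (hp (ha.strongProd_left p.2) (hb.strongProd_left p.2) (by simp [hab])).2.1.resolve_left
      hab
  · exact (hp (ha.strongProd_right p.1) (hb.strongProd_right p.1) (by simp [hab])).2.2.resolve_left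
      hab

theorem setOf_isSimplicial_strongProd :
    {p | IsSimplicial (strongProd G H) p} = {v | IsSimplicial G v} ×ˢ {v | IsSimplicial H v} := by
  ext p
  exact isSimplicial_strongProd_iff

def strongProdComm : strongProd G H ≃g strongProd H G where
  toEquiv := Equiv.prodComm α β
  map_rel_iff' := by
    simp only [strongProd, Equiv.prodComm_apply, Prod.fst_swap, Prod.snd_swap, ne_eq,
      Prod.swap_inj]
    tauto

theorem intervalSet_prod_intervalSet_subset (hG : G.Connected) (hH : H.Connected)
    (A : Set α) (B : Set β) :
    intervalSet G A ×ˢ intervalSet H B ⊆ intervalSet (strongProd G H) (A ×ˢ B) := by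
  rintro ⟨w₁, w₂⟩ ⟨hw₁, hw₂⟩
  obtain ⟨u₁, hu₁, v₁, hv₁, h₁⟩ := mem_intervalSet.1 hw₁
  obtain ⟨u₂, hu₂, v₂, hv₂, h₂⟩ := mem_intervalSet.1 hw₂
  simp only [interval, Set.mem_ofPred_eq] at h₁ h₂
  have := G.dist_comm (u := w₁) (v := u₁)
  have := G.dist_comm (u := w₁) (v := v₁)
  have := H.dist_comm (u := w₂) (v := u₂)
  have := H.dist_comm (u := w₂) (v := v₂)
  simp only [mem_intervalSet, interval, Set.mem_ofPred_eq, dist_strongProd hG hH, Set.mem_prod,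
    Prod.exists]
  rcases (by omega : (G.dist u₁ w₁ ≤ H.dist u₂ w₂ ∧ G.dist u₁ w₁ ≤ H.dist w₂ v₂) ∨
      (G.dist w₁ v₁ ≤ H.dist u₂ w₂ ∧ G.dist w₁ v₁ ≤ H.dist w₂ v₂) ∨
      (H.dist u₂ w₂ ≤ G.dist u₁ w₁ ∧ H.dist u₂ w₂ ≤ G.dist w₁ v₁) ∨
      (H.dist w₂ v₂ ≤ G.dist u₁ w₁ ∧ H.dist w₂ v₂ ≤ G.dist w₁ v₁)) with h | h | h | h
  · exact ⟨u₁, u₂, ⟨hu₁, hu₂⟩, u₁, v₂, ⟨hu₁, hv₂⟩, by simp only [dist_self]; omega⟩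
  · exact ⟨v₁, u₂, ⟨hv₁, hu₂⟩, v₁, v₂, ⟨hv₁, hv₂⟩, by simp only [dist_self]; omega⟩
  · exact ⟨u₁, u₂, ⟨hu₁, hu₂⟩, v₁, u₂, ⟨hv₁, hu₂⟩, by simp only [dist_self]; omega⟩
  · exact ⟨u₁, v₂, ⟨hu₁, hv₂⟩, v₁, v₂, ⟨hv₁, hv₂⟩, by simp only [dist_self]; omega⟩

theorem mem_interval_fst_of_mem_interval_strongProd (hG : G.Connected) (hH : H.Connected)
    {u v w : α × β} (hw : IsSimplicial H w.2) (h : w ∈ interval (strongProd G H) u v) :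
    w.1 ∈ interval G u.1 v.1 := by
  simp only [interval, Set.mem_ofPred_eq, dist_strongProd hG hH] at h ⊢
  have t₁ : G.dist u.1 v.1 ≤ G.dist u.1 w.1 + G.dist w.1 v.1 := hG.dist_triangle
  have t₂ : H.dist u.2 v.2 ≤ H.dist u.2 w.2 + H.dist w.2 v.2 := hH.dist_triangle
  rcases (by omega : G.dist u.1 w.1 + G.dist w.1 v.1 = G.dist u.1 v.1 ∨
      (H.dist u.2 w.2 + H.dist w.2 v.2 = H.dist u.2 v.2 ∧
        G.dist u.1 w.1 ≤ H.dist u.2 w.2 ∧ G.dist w.1 v.1 ≤ H.dist w.2 v.2))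
    with h₁ | ⟨h₂, hu, hv⟩
  · exact h₁
  rcases hw.eq_or_eq_of_mem_interval hH h₂ with he | he
  · rw [he, dist_self, Nat.le_zero, hG.dist_eq_zero_iff] at hu
    simp [hu]
  · rw [he, dist_self, Nat.le_zero, hG.dist_eq_zero_iff] at hv
    simp [hv]

theorem ExtremeGeodesic.of_strongProd_left (hG : G.Connected) (hH : H.Connected)
    (h : ExtremeGeodesic (strongProd G H)) : ExtremeGeodesic G := by
  have : Nonempty α := hG.nonempty
  have : Nonempty β := hH.nonempty
  obtain ⟨p, hp⟩ := h.exists_isSimplicial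
  refine Set.eq_univ_of_forall fun w => ?_
  obtain ⟨u, hu, v, hv, huv⟩ := mem_intervalSet.1 (IsGeodetic.mem_intervalSet h (w, p.2))
  exact mem_intervalSet.2 ⟨u.1, (isSimplicial_strongProd_iff.1 hu).1, v.1,
    (isSimplicial_strongProd_iff.1 hv).1,
    mem_interval_fst_of_mem_interval_strongProd hG hH (w := (w, p.2))
      (isSimplicial_strongProd_iff.1 hp).2 huv⟩

theorem ExtremeGeodesic.of_strongProd_right (hG : G.Connected) (hH : H.Connected)
    (h : ExtremeGeodesic (strongProd G H)) : ExtremeGeodesic H :=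
  (h.of_iso strongProdComm (hG.strongProd hH)).of_strongProd_left hH hG

theorem ExtremeGeodesic.strongProd (hG : G.Connected) (hH : H.Connected)
    (hGe : ExtremeGeodesic G) (hHe : ExtremeGeodesic H) : ExtremeGeodesic (strongProd G H) := by
  have h := intervalSet_prod_intervalSet_subset hG hH {v | IsSimplicial G v} {v | IsSimplicial H v}
  rw [hGe, hHe, Set.univ_prod_univ, Set.univ_subset_iff, ← setOf_isSimplicial_strongProd] at h
  exact h

end StrongProd

end SimpleGraph

theorem strongProd_extremeGeodesic_iff {α β : Type*} [Fintype α] [Fintype β]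
    (G : SimpleGraph α) (H : SimpleGraph β) (hG : G.Connected) (hH : H.Connected) :
    (ExtremeGeodesic G ∧ ExtremeGeodesic H ↔ ExtremeGeodesic (strongProd G H)) ∧
      (ExtremeGeodesic G → ExtremeGeodesic H →
        geodeticNumber (strongProd G H) = geodeticNumber G * geodeticNumber H ∧
        hullNumber (strongProd G H) = geodeticNumber G * geodeticNumber H) := by
  refine ⟨⟨fun ⟨hGe, hHe⟩ => hGe.strongProd hG hH hHe,
    fun h => ⟨h.of_strongProd_left hG hH, h.of_strongProd_right hG hH⟩⟩, fun hGe hHe => ?_⟩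
  have hGH := hG.strongProd hH
  have hGHe := hGe.strongProd hG hH hHe
  rw [hGHe.geodeticNumber_eq hGH, hGHe.hullNumber_eq hGH, hGe.geodeticNumber_eq hG,
    hHe.geodeticNumber_eq hH, setOf_isSimplicial_strongProd, Set.ncard_prod]
  exact ⟨rfl, rfl⟩
end

section
/- Let H = C_{2h+1} be an odd cycle with h ≥ 2, and let S be a set of vertices of H with 2 ≤ |S| ≤ 4. Then there exist two distinct vertices x, y ∈ S such that x ∉ I[S∖{x}] and y ∉ I[S∖{y}]. -/
open SimpleGraph

/-!
A vertex `x` of `C_{2h+1}` lies on a geodesic between two other vertices `u`, `v` only if one of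
the two arcs from `u` to `v` through `x` has at most `h` edges. When `x, u, v ∈ S`, that arc
contains the two neighbours of `x` in the cyclic order of `S`, so `x ∈ I[S∖{x}]` forces the two
gaps of `S` next to `x` to add up to at most `h`, while all the gaps of `S` add up to `2h+1`. For
`|S| ≤ 4` the gap pairs of two suitable points (any two if `|S| ≤ 3`, two opposite ones if
`|S| = 4`) cover every gap, so at most one of these two points lies in `I[S∖{·}]`.
-/

theorem Fin.val_sub_add_val_cases {n : ℕ} (a b : Fin n) :
    (a - b).val + b.val = a.val ∨ (a - b).val + b.val = a.val + n := by
  rcases le_or_gt b a with hba | hab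
  · left
    rw [Fin.sub_val_of_le hba]
    exact Nat.sub_add_cancel hba
  · right
    rw [Fin.coe_sub_iff_lt.2 hab]
    have : a.val < b.val := hab
    omega

theorem Fin.val_one_of_two_le {n : ℕ} [NeZero n] (hn : 2 ≤ n) : (1 : Fin n).val = 1 := by
  rw [Fin.val_one']
  exact Nat.mod_eq_of_lt hn

theorem Fin.val_add_one_cases {n : ℕ} [NeZero n] (hn : 2 ≤ n) (i : Fin n) :
    (i + 1).val = i.val + 1 ∨ (i + 1).val + n = i.val + 1 := by
  have := Fin.val_sub_add_val_cases (i + 1) i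
  rw [add_sub_cancel_left, Fin.val_one_of_two_le hn] at this
  omega

namespace SimpleGraph

variable {m : ℕ}

theorem cycleGraph_min_val_sub_le_length {u v : Fin m} (p : (cycleGraph m).Walk u v) :
    min (v - u).val (u - v).val ≤ p.length := by
  induction p with
  | nil => simp [Fin.sub_val_of_le le_rfl]
  | @cons u w v huw p ih =>
    rw [cycleGraph_adj'] at huw
    have := Fin.val_sub_add_val_cases v u
    have := Fin.val_sub_add_val_cases u v
    have := Fin.val_sub_add_val_cases v w
    have := Fin.val_sub_add_val_cases w v
    have := Fin.val_sub_add_val_cases u w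
    have := Fin.val_sub_add_val_cases w u
    rw [Walk.length_cons]
    omega

theorem cycleGraph_dist_le_val_sub [NeZero m] (u v : Fin m) :
    (cycleGraph m).dist u v ≤ (v - u).val := by
  induction hd : (v - u).val generalizing v with
  | zero => simp [sub_eq_zero.1 (Fin.ext hd)]
  | succ d ih =>
    have h1 := Fin.val_one_of_two_le (n := m) (by have := (v - u).isLt; omega)
    have hadj : (cycleGraph m).Adj (v - 1) v :=
      cycleGraph_adj'.2 (.inr (by rw [sub_sub_cancel, h1]))
    have hd' : (v - 1 - u).val = d := by
      rw [sub_right_comm, Fin.sub_val_of_le (by rw [Fin.le_def, h1, hd]; omega), h1, hd]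
      rfl
    calc (cycleGraph m).dist u v
        ≤ (cycleGraph m).dist u (v - 1) + (cycleGraph m).dist (v - 1) v :=
          (cycleGraph_preconnected _ _).dist_triangle_right u
      _ ≤ d + 1 := by
          rw [dist_eq_one_iff_adj.2 hadj]
          exact Nat.add_le_add_right (ih _ hd') 1

theorem cycleGraph_dist [NeZero m] (u v : Fin m) :
    (cycleGraph m).dist u v = min (v - u).val (u - v).val := by
  refine le_antisymm (le_min (cycleGraph_dist_le_val_sub u v) ?_) ?_
  · rw [dist_comm]
    exact cycleGraph_dist_le_val_sub v u
  · obtain ⟨p, hp⟩ := (cycleGraph_preconnected u v).exists_walk_length_eq_dist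
    exact hp ▸ cycleGraph_min_val_sub_le_length p

/-- In an odd cycle the two arcs between two vertices never have the same length, so a geodesic
through `x` is one of the two arcs from `u` to `v` through `x`. -/
theorem arc_le_of_mem_interval_cycleGraph {h : ℕ} {u v x : Fin (2 * h + 1)} (hxu : x ≠ u)
    (hxv : x ≠ v) (hx : x ∈ interval (cycleGraph (2 * h + 1)) u v) :
    (x - u).val + (v - x).val ≤ h ∨ (u - x).val + (x - v).val ≤ h := by
  simp only [interval, Set.mem_ofPred_eq, cycleGraph_dist] at hx
  have := Fin.val_ne_of_ne hxu
  have := Fin.val_ne_of_ne hxv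
  have := Fin.val_sub_add_val_cases x u
  have := Fin.val_sub_add_val_cases u x
  have := Fin.val_sub_add_val_cases v x
  have := Fin.val_sub_add_val_cases x v
  have := Fin.val_sub_add_val_cases u v
  have := Fin.val_sub_add_val_cases v u
  omega

end SimpleGraph

/-- `x` lies strictly inside an arc of at most `h` edges of the cycle `Fin n` with both ends in
`S`; the arc runs forward from `u` through `x` to `v`. -/
def InShortArc {n : ℕ} (h : ℕ) (S : Set (Fin n)) (x : Fin n) : Prop :=
  ∃ u ∈ S, u ≠ x ∧ ∃ v ∈ S, v ≠ x ∧ (x - u).val + (v - x).val ≤ h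

theorem inShortArc_of_mem_intervalSet_diff {h : ℕ} {S : Set (Fin (2 * h + 1))}
    {x : Fin (2 * h + 1)} (hx : x ∈ intervalSet (cycleGraph (2 * h + 1)) (S \ {x})) :
    InShortArc h S x := by
  simp only [intervalSet, Set.mem_iUnion, Set.mem_sdiff, Set.mem_singleton_iff] at hx
  obtain ⟨u, ⟨hu, hux⟩, v, ⟨hv, hvx⟩, hx⟩ := hx
  rcases arc_le_of_mem_interval_cycleGraph (Ne.symm hux) (Ne.symm hvx) hx with harc | harc
  · exact ⟨u, hu, hux, v, hv, hvx, harc⟩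
  · exact ⟨v, hv, hvx, u, hu, hux, by omega⟩

namespace StrictMono

variable {n k : ℕ} [NeZero k] {s : Fin k → Fin n}

theorem val_sub_pred_le (hs : StrictMono s) {i j : Fin k} (hji : j ≠ i) :
    (s i - s (i - 1)).val ≤ (s i - s j).val := by
  have hji' := Fin.val_ne_of_ne hji
  have hp := Fin.val_add_one_cases (by omega) (i - 1)
  rw [sub_add_cancel] at hp
  have m1 : (s j).val ≤ (s (i - 1)).val ↔ j.val ≤ (i - 1).val := hs.le_iff_le
  have m2 : (s (i - 1)).val < (s i).val ↔ (i - 1).val < i.val := hs.lt_iff_lt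
  have m3 : (s i).val < (s j).val ↔ i.val < j.val := hs.lt_iff_lt
  have := Fin.val_sub_add_val_cases (s i) (s (i - 1))
  have := Fin.val_sub_add_val_cases (s i) (s j)
  have := (s j).isLt
  have := j.isLt
  generalize i - 1 = p at *
  omega

theorem val_succ_sub_le (hs : StrictMono s) {i j : Fin k} (hji : j ≠ i) :
    (s (i + 1) - s i).val ≤ (s j - s i).val := by
  have hji' := Fin.val_ne_of_ne hji
  have hq := Fin.val_add_one_cases (by omega) i
  have m1 : (s (i + 1)).val ≤ (s j).val ↔ (i + 1).val ≤ j.val := hs.le_iff_le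
  have m2 : (s i).val < (s (i + 1)).val ↔ i.val < (i + 1).val := hs.lt_iff_lt
  have m3 : (s j).val < (s i).val ↔ j.val < i.val := hs.lt_iff_lt
  have := Fin.val_sub_add_val_cases (s (i + 1)) (s i)
  have := Fin.val_sub_add_val_cases (s j) (s i)
  have := (s i).isLt
  have := j.isLt
  generalize i + 1 = q at *
  omega

theorem gap_le_of_inShortArc {h : ℕ} (hs : StrictMono s) {i : Fin k}
    (hi : InShortArc h (Set.range s) (s i)) :
    (s i - s (i - 1)).val + (s (i + 1) - s i).val ≤ h := by
  obtain ⟨_, ⟨j, rfl⟩, hj, _, ⟨l, rfl⟩, hl, harc⟩ := hi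
  have := hs.val_sub_pred_le (i := i) (j := j) (by rintro rfl; exact hj rfl)
  have := hs.val_succ_sub_le (i := i) (j := l) (by rintro rfl; exact hl rfl)
  omega

end StrictMono

section

variable {h : ℕ}

theorem exists_pair_not_inShortArc_fin_two {s : Fin 2 → Fin (2 * h + 1)}
    (hs : StrictMono s) :
    ∃ i j, i ≠ j ∧ ¬InShortArc h (Set.range s) (s i) ∧
      ¬InShortArc h (Set.range s) (s j) := by
  have c0 : InShortArc h (Set.range s) (s 0) → (s 0 - s 1).val + (s 1 - s 0).val ≤ h :=
    hs.gap_le_of_inShortArc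
  have c1 : InShortArc h (Set.range s) (s 1) → (s 1 - s 0).val + (s 0 - s 1).val ≤ h :=
    hs.gap_le_of_inShortArc
  have gap_sum : (s 1 - s 0).val + (s 0 - s 1).val = 2 * h + 1 := by
    have : s 0 < s 1 := hs (by decide)
    have := Fin.val_sub_add_val_cases (s 1) (s 0)
    have := Fin.val_sub_add_val_cases (s 0) (s 1)
    omega
  exact ⟨0, 1, by decide, fun h0 => by linarith [c0 h0], fun h1 => by linarith [c1 h1]⟩

theorem exists_pair_not_inShortArc_fin_three {s : Fin 3 → Fin (2 * h + 1)}
    (hs : StrictMono s) :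
    ∃ i j, i ≠ j ∧ ¬InShortArc h (Set.range s) (s i) ∧
      ¬InShortArc h (Set.range s) (s j) := by
  have c0 : InShortArc h (Set.range s) (s 0) → (s 0 - s 2).val + (s 1 - s 0).val ≤ h :=
    hs.gap_le_of_inShortArc
  have c1 : InShortArc h (Set.range s) (s 1) → (s 1 - s 0).val + (s 2 - s 1).val ≤ h :=
    hs.gap_le_of_inShortArc
  have c2 : InShortArc h (Set.range s) (s 2) → (s 2 - s 1).val + (s 0 - s 2).val ≤ h :=
    hs.gap_le_of_inShortArc
  have gap_sum : (s 1 - s 0).val + (s 2 - s 1).val + (s 0 - s 2).val = 2 * h + 1 := by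
    have : s 0 < s 1 := hs (by decide)
    have : s 1 < s 2 := hs (by decide)
    have := Fin.val_sub_add_val_cases (s 1) (s 0)
    have := Fin.val_sub_add_val_cases (s 2) (s 1)
    have := Fin.val_sub_add_val_cases (s 0) (s 2)
    omega
  by_cases h0 : InShortArc h (Set.range s) (s 0)
  · exact ⟨1, 2, by decide, fun h1 => by linarith [c0 h0, c1 h1],
      fun h2 => by linarith [c0 h0, c2 h2]⟩
  by_cases h1 : InShortArc h (Set.range s) (s 1)
  · exact ⟨0, 2, by decide, h0, fun h2 => by linarith [c1 h1, c2 h2]⟩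
  exact ⟨0, 1, by decide, h0, h1⟩

theorem exists_pair_not_inShortArc_fin_four {s : Fin 4 → Fin (2 * h + 1)}
    (hs : StrictMono s) :
    ∃ i j, i ≠ j ∧ ¬InShortArc h (Set.range s) (s i) ∧
      ¬InShortArc h (Set.range s) (s j) := by
  have c0 : InShortArc h (Set.range s) (s 0) → (s 0 - s 3).val + (s 1 - s 0).val ≤ h :=
    hs.gap_le_of_inShortArc
  have c1 : InShortArc h (Set.range s) (s 1) → (s 1 - s 0).val + (s 2 - s 1).val ≤ h :=
    hs.gap_le_of_inShortArc
  have c2 : InShortArc h (Set.range s) (s 2) → (s 2 - s 1).val + (s 3 - s 2).val ≤ h :=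
    hs.gap_le_of_inShortArc
  have c3 : InShortArc h (Set.range s) (s 3) → (s 3 - s 2).val + (s 0 - s 3).val ≤ h :=
    hs.gap_le_of_inShortArc
  have gap_sum :
      (s 1 - s 0).val + (s 2 - s 1).val + (s 3 - s 2).val + (s 0 - s 3).val = 2 * h + 1 := by
    have : s 0 < s 1 := hs (by decide)
    have : s 1 < s 2 := hs (by decide)
    have : s 2 < s 3 := hs (by decide)
    have := Fin.val_sub_add_val_cases (s 1) (s 0)
    have := Fin.val_sub_add_val_cases (s 2) (s 1)
    have := Fin.val_sub_add_val_cases (s 3) (s 2)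
    have := Fin.val_sub_add_val_cases (s 0) (s 3)
    omega
  obtain ⟨i, hi, hi'⟩ : ∃ i, (i = 0 ∨ i = 2) ∧ ¬InShortArc h (Set.range s) (s i) := by
    by_cases h0 : InShortArc h (Set.range s) (s 0)
    · exact ⟨2, .inr rfl, fun h2 => by linarith [c0 h0, c2 h2]⟩
    · exact ⟨0, .inl rfl, h0⟩
  obtain ⟨j, hj, hj'⟩ : ∃ j, (j = 1 ∨ j = 3) ∧ ¬InShortArc h (Set.range s) (s j) := by
    by_cases h1 : InShortArc h (Set.range s) (s 1)
    · exact ⟨3, .inr rfl, fun h3 => by linarith [c1 h1, c3 h3]⟩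
    · exact ⟨1, .inl rfl, h1⟩
  exact ⟨i, j, by rcases hi with rfl | rfl <;> rcases hj with rfl | rfl <;> decide, hi', hj'⟩

theorem Finset.exists_pair_not_inShortArc {T : Finset (Fin (2 * h + 1))} (h2 : 2 ≤ T.card)
    (h4 : T.card ≤ 4) :
    ∃ x ∈ T, ∃ y ∈ T, x ≠ y ∧ ¬InShortArc h T x ∧ ¬InShortArc h T y := by
  have of_sorted : ∀ k (hk : T.card = k),
      (∀ s : Fin k → Fin (2 * h + 1), StrictMono s →
        ∃ i j, i ≠ j ∧ ¬InShortArc h (Set.range s) (s i) ∧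
          ¬InShortArc h (Set.range s) (s j)) →
      ∃ x ∈ T, ∃ y ∈ T, x ≠ y ∧ ¬InShortArc h T x ∧ ¬InShortArc h T y := by
    intro k hk H
    obtain ⟨i, j, hij, hi, hj⟩ := H _ (T.orderEmbOfFin hk).strictMono
    rw [T.range_orderEmbOfFin hk] at hi hj
    exact ⟨_, T.orderEmbOfFin_mem hk i, _, T.orderEmbOfFin_mem hk j,
      (T.orderEmbOfFin hk).injective.ne hij, hi, hj⟩
  rcases (by omega : T.card = 2 ∨ T.card = 3 ∨ T.card = 4) with hk | hk | hk
  · exact of_sorted 2 hk fun _ => exists_pair_not_inShortArc_fin_two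
  · exact of_sorted 3 hk fun _ => exists_pair_not_inShortArc_fin_three
  · exact of_sorted 4 hk fun _ => exists_pair_not_inShortArc_fin_four

end

theorem oddCycle_condition_B_general (h : ℕ)
    (S : Set (Fin (2 * h + 1))) (h2 : 2 ≤ S.ncard) (h4 : S.ncard ≤ 4) :
    ∃ x ∈ S, ∃ y ∈ S, x ≠ y ∧
      x ∉ intervalSet (cycleGraph (2 * h + 1)) (S \ {x}) ∧
      y ∉ intervalSet (cycleGraph (2 * h + 1)) (S \ {y}) := by
  obtain ⟨T, rfl⟩ := S.toFinite.exists_finset_coe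
  rw [Set.ncard_coe_finset] at h2 h4
  obtain ⟨x, hx, y, hy, hxy, hx', hy'⟩ := Finset.exists_pair_not_inShortArc h2 h4
  exact ⟨x, hx, y, hy, hxy, mt inShortArc_of_mem_intervalSet_diff hx',
    mt inShortArc_of_mem_intervalSet_diff hy'⟩

theorem oddCycle_condition_B (h : ℕ) (hh : 2 ≤ h)
    (S : Set (Fin (2 * h + 1))) (h2 : 2 ≤ S.ncard) (h4 : S.ncard ≤ 4) :
    ∃ x ∈ S, ∃ y ∈ S, x ≠ y ∧
      x ∉ intervalSet (cycleGraph (2 * h + 1)) (S \ {x}) ∧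
      y ∉ intervalSet (cycleGraph (2 * h + 1)) (S \ {y}) :=
  oddCycle_condition_B_general h S h2 h4
end
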